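/- Let L be a split regular Hom-Leibniz algebra with symmetric root system Λ. If [α] ≠ [β] are distinct connection-equivalence classes of roots, then [I_{[α]}, I_{[β]}] = 0, where I_{[γ]} = span{[L_δ, L_{-δ}] : δ ∈ [γ]} ⊕ (⊕_{δ∈[γ]} L_δ). -/
import Mathlib


open Submodule

/-- A split regular Hom-Leibniz algebra: a vector space `L` over `K` with a bilinear
product, an algebra automorphism `φ` satisfying the Hom-Leibniz identity, together with
a distinguished abelian subalgebra `H` (with `φ|_H` given as `φH`). -/
structure SplitRegularHomLeibniz (K L : Type*) [Field K] [AddCommGroup L] [Module K L] where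
  bracket : L →ₗ[K] L →ₗ[K] L
  φ : L ≃ₗ[K] L
  leibniz : ∀ x y z : L, bracket (bracket y z) (φ x)
      = bracket (bracket y x) (φ z) + bracket (φ y) (bracket z x)
  φ_bracket : ∀ x y : L, φ (bracket x y) = bracket (φ x) (φ y)
  H : Submodule K L
  H_abelian : ∀ x ∈ H, ∀ y ∈ H, bracket x y = 0
  φH : H ≃ₗ[K] H
  φH_spec : ∀ h : H, (φH h : L) = φ h

namespace SplitRegularHomLeibniz

variable {K L : Type*} [Field K] [AddCommGroup L] [Module K L]
variable (A : SplitRegularHomLeibniz K L)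

/-- The root space associated to a linear functional `α : H → K`. -/
def rootSpace (α : Module.Dual K A.H) : Submodule K L where
  carrier := {v | ∀ h : A.H, A.bracket v h = α h • A.φ v}
  add_mem' := by
    intro a b ha hb h
    simp [map_add, ha h, hb h, smul_add]
  zero_mem' := by intro h; simp
  smul_mem' := by
    intro c a ha h
    simp only [map_smul, LinearMap.smul_apply, ha h]
    rw [smul_comm]

/-- The set of nonzero roots. -/
def roots : Set (Module.Dual K A.H) := {α | α ≠ 0 ∧ A.rootSpace α ≠ ⊥}

/-- The splitting condition : `L = H ⊕ (⊕_{α ∈ Λ} L_α)`. -/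
def IsSplit : Prop :=
  (A.H ⊔ ⨆ α ∈ A.roots, A.rootSpace α) = ⊤ ∧
  iSupIndep
    (fun i : Option A.roots => Option.elim i A.H (fun α => A.rootSpace α.1))

/-- `H` is a maximal abelian subalgebra. -/
def MaximalAbelian : Prop := ∀ H' : Submodule K L,
  (∀ x ∈ H', ∀ y ∈ H', A.bracket x y = 0) → H'.map A.φ.toLinearMap = H' →
    A.H ≤ H' → H' = A.H

/-- The map `α ↦ α ∘ φ⁻¹` on linear functionals on `H`. -/
def twist (α : Module.Dual K A.H) : Module.Dual K A.H :=
  α.comp A.φH.symm.toLinearMap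

/-- The map `α ↦ α ∘ φ^{-z}` for `z : ℤ`. -/
def ztwist (z : ℤ) (α : Module.Dual K A.H) : Module.Dual K A.H :=
  α.comp ((A.φH ^ (-z)).toLinearMap)

/-- Twisted partial sums of a chain of roots:
`s 0 = f 0`, `s (i+1) = (s i)∘φ⁻¹ + (f (i+1))∘φ⁻¹`. -/
def chainSums (f : ℕ → Module.Dual K A.H) : ℕ → Module.Dual K A.H
  | 0 => f 0
  | i + 1 => A.twist (chainSums f i + f (i + 1))

/-- `α` is connected to `β`. -/
def Connected (α β : Module.Dual K A.H) : Prop :=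
  ∃ (k : ℕ) (f : ℕ → Module.Dual K A.H),
    (∀ i ≤ k, f i ∈ A.roots) ∧
    (∃ n : ℕ, f 0 = A.twist^[n] α) ∧
    (∀ i < k, A.chainSums f i ∈ A.roots) ∧
    (∃ m : ℕ, A.chainSums f k = A.twist^[m] β ∨ A.chainSums f k = -(A.twist^[m] β))

/-- Symmetric root system. -/
def SymmetricRoots : Prop := ∀ α ∈ A.roots, -α ∈ A.roots

/-- `[L_α, L_{-α}]` as a submodule (its span). -/
def bracketSpan (α : Module.Dual K A.H) : Submodule K L :=
  Submodule.span K
    (Set.image2 (fun x y => A.bracket x y) (A.rootSpace α : Set L) (A.rootSpace (-α) : Set L))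

/-- The connection class of `α`. -/
def cls (α : Module.Dual K A.H) : Set (Module.Dual K A.H) :=
  {β | β ∈ A.roots ∧ A.Connected α β}

def I0 (α : Module.Dual K A.H) : Submodule K L := ⨆ β ∈ A.cls α, A.bracketSpan β

def Vcls (α : Module.Dual K A.H) : Submodule K L := ⨆ β ∈ A.cls α, A.rootSpace β

/-- The ideal associated to the connection class of `α`. -/
def Icls (α : Module.Dual K A.H) : Submodule K L := A.I0 α ⊔ A.Vcls α

/-- Ideals of a Hom-Leibniz algebra. -/
def IsIdeal (I : Submodule K L) : Prop :=
  (∀ x ∈ I, ∀ y : L, A.bracket x y ∈ I ∧ A.bracket y x ∈ I) ∧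
    I.map A.φ.toLinearMap = I

/-- The ideal `J` generated by the squares `[x,x]`. -/
def J : Submodule K L :=
  sInf {I : Submodule K L | A.IsIdeal I ∧ ∀ x : L, A.bracket x x ∈ I}

/-- The annihilator `Z(L)`. -/
def annihilator : Set L :=
  {x | ∀ y : L, A.bracket x y = 0 ∧ A.bracket y x = 0}


/-- The candidate ideal attached to a set of roots. -/
def IOfClass (S : Set (Module.Dual K A.H)) : Submodule K L :=
  (⨆ β ∈ S, A.bracketSpan β) ⊔ (⨆ β ∈ S, A.rootSpace β)

/-- Maximal length: every root space is one-dimensional. -/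
def MaximalLength : Prop := ∀ α ∈ A.roots, Module.finrank K (A.rootSpace α) = 1

/-- `L = [L,L]`. -/
def BracketGenerates : Prop :=
  Submodule.span K {z : L | ∃ x y : L, z = A.bracket x y} = ⊤

/-- The roots `α` with `L_α ⊆ J`. -/
def rootsJ : Set (Module.Dual K A.H) := {α ∈ A.roots | A.rootSpace α ≤ A.J}

/-- The roots `α` with `L_α ∩ J = 0`. -/
def rootsNotJ : Set (Module.Dual K A.H) := {α ∈ A.roots | A.rootSpace α ⊓ A.J = ⊥}

/-- Root-multiplicativity for split regular Hom-Leibniz algebras of maximal length. -/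
def RootMultiplicative : Prop :=
  (∀ α ∈ A.rootsNotJ, ∀ β ∈ A.rootsNotJ, A.twist α + A.twist β ∈ A.roots →
    ∃ x ∈ A.rootSpace α, ∃ y ∈ A.rootSpace β, A.bracket x y ≠ 0) ∧
  (∀ α ∈ A.rootsNotJ, ∀ γ ∈ A.rootsJ, A.twist α + A.twist γ ∈ A.rootsJ →
    ∃ x ∈ A.rootSpace α, ∃ y ∈ A.rootSpace γ, A.bracket x y ≠ 0)

/-- `α` is `¬J`-connected to `β` (both in `Λ^γ`, given by the set `S`):
there is a chain whose elements beyond the first lie in `Λ^{¬J}` and whose twisted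
partial sums lie in `Λ^γ`. -/
def NotJConnected (S : Set (Module.Dual K A.H)) (α β : Module.Dual K A.H) : Prop :=
  ∃ (k : ℕ) (f : ℕ → Module.Dual K A.H),
    (∀ i, 1 ≤ i → i ≤ k → f i ∈ A.rootsNotJ) ∧
    (∃ n : ℕ, f 0 = A.twist^[n] α) ∧
    (∀ i ≤ k, A.chainSums f i ∈ S) ∧
    (∃ m : ℕ, A.chainSums f k = A.twist^[m] β ∨ A.chainSums f k = -(A.twist^[m] β))

/-- Triviality of the Lie-annihilator `Z_Lie(L)`. -/
def LieAnnZero : Prop := ∀ x : L,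
  (∀ y ∈ A.H ⊔ ⨆ α ∈ A.rootsNotJ, A.rootSpace α,
    A.bracket x y = 0 ∧ A.bracket y x = 0) → x = 0

end SplitRegularHomLeibniz

namespace SplitRegularHomLeibniz

variable {K L : Type*} [Field K] [AddCommGroup L] [Module K L]
variable (A : SplitRegularHomLeibniz K L)

/-- inverse of twist -/
def untwist (γ : Module.Dual K A.H) : Module.Dual K A.H :=
  γ.comp A.φH.toLinearMap

lemma twist_untwist (γ : Module.Dual K A.H) : A.twist (A.untwist γ) = γ := by
  ext h; simp [twist, untwist]

lemma untwist_twist (γ : Module.Dual K A.H) : A.untwist (A.twist γ) = γ := by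
  ext h; simp [twist, untwist]

lemma twist_add (a b : Module.Dual K A.H) : A.twist (a + b) = A.twist a + A.twist b := by
  ext h; simp [twist]

lemma twist_neg (a : Module.Dual K A.H) : A.twist (-a) = -A.twist a := by
  ext h; simp [twist]

lemma untwist_neg (a : Module.Dual K A.H) : A.untwist (-a) = -A.untwist a := by
  ext h; simp [untwist]

lemma twist_eq_zero {a : Module.Dual K A.H} (h : A.twist a = 0) : a = 0 := by
  have := congrArg A.untwist h
  rwa [untwist_twist, show A.untwist 0 = 0 by ext h; simp [untwist]] at this

lemma titer_add (n : ℕ) (a b : Module.Dual K A.H) :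
    A.twist^[n] (a + b) = A.twist^[n] a + A.twist^[n] b := by
  induction n with
  | zero => simp
  | succ n ih => simp [Function.iterate_succ_apply', ih, twist_add]

lemma titer_neg (n : ℕ) (a : Module.Dual K A.H) :
    A.twist^[n] (-a) = -(A.twist^[n] a) := by
  induction n with
  | zero => simp
  | succ n ih => simp [Function.iterate_succ_apply', ih, twist_neg]

lemma mem_rootSpace {x : L} {γ : Module.Dual K A.H} :
    x ∈ A.rootSpace γ ↔ ∀ h : A.H, A.bracket x h = γ h • A.φ x := Iff.rfl

lemma coe_phH_symm (h : A.H) : A.φ ((A.φH.symm h : A.H) : L) = (h : L) := by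
  rw [← A.φH_spec, A.φH.apply_symm_apply]

/-- φ maps L_γ into L_{twist γ}. -/
lemma phi_rootSpace {x : L} {γ : Module.Dual K A.H} (hx : x ∈ A.rootSpace γ) :
    A.φ x ∈ A.rootSpace (A.twist γ) := by
  intro h
  have h1 : A.bracket (A.φ x) ((h : A.H) : L) = A.φ (A.bracket x ((A.φH.symm h : A.H) : L)) := by
    rw [A.φ_bracket, coe_phH_symm]
  rw [h1, hx (A.φH.symm h), map_smul]
  rfl

/-- φ⁻¹ maps L_γ into L_{untwist γ}. -/
lemma phi_symm_rootSpace {x : L} {γ : Module.Dual K A.H} (hx : x ∈ A.rootSpace γ) :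
    A.φ.symm x ∈ A.rootSpace (A.untwist γ) := by
  intro h
  apply A.φ.injective
  rw [A.φ_bracket, A.φ.apply_symm_apply, ← A.φH_spec, hx (A.φH h), map_smul]
  rfl

/-- key bracket lemma: [L_δ, L_ε] ⊆ L_{twist (δ+ε)}. -/
lemma bracket_rootSpace {x y : L} {δ ε : Module.Dual K A.H}
    (hx : x ∈ A.rootSpace δ) (hy : y ∈ A.rootSpace ε) :
    A.bracket x y ∈ A.rootSpace (A.twist (δ + ε)) := by
  intro h
  set h' : A.H := A.φH.symm h with hh'
  have hco : ((h : A.H) : L) = A.φ (h' : L) := (coe_phH_symm A h).symm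
  rw [hco]
  have := A.leibniz (h' : L) x y
  rw [this, hx h', hy h']
  simp only [map_smul, LinearMap.smul_apply, ← A.φ_bracket]
  rw [← add_smul]
  rfl

lemma twist_mem_roots {γ : Module.Dual K A.H} (hγ : γ ∈ A.roots) : A.twist γ ∈ A.roots := by
  obtain ⟨hne, hbot⟩ := hγ
  refine ⟨fun h => hne ?_, fun h => hbot ?_⟩
  · have := congrArg A.untwist h
    rwa [untwist_twist, show A.untwist 0 = 0 by ext x; simp [untwist]] at this
  · rw [Submodule.eq_bot_iff] at h ⊢
    intro x hx
    have := h (A.φ x) (A.phi_rootSpace hx)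
    exact A.φ.map_eq_zero_iff.mp this

lemma untwist_mem_roots {γ : Module.Dual K A.H} (hγ : γ ∈ A.roots) : A.untwist γ ∈ A.roots := by
  obtain ⟨hne, hbot⟩ := hγ
  refine ⟨fun h => hne ?_, fun h => hbot ?_⟩
  · have := congrArg A.twist h
    rwa [twist_untwist, show A.twist 0 = 0 by ext x; simp [twist]] at this
  · rw [Submodule.eq_bot_iff] at h ⊢
    intro x hx
    have := h (A.φ.symm x) (A.phi_symm_rootSpace hx)
    exact (LinearEquiv.map_eq_zero_iff A.φ.symm).mp this

lemma titer_mem_roots (n : ℕ) {γ : Module.Dual K A.H} (hγ : γ ∈ A.roots) :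
    A.twist^[n] γ ∈ A.roots := by
  induction n with
  | zero => simpa
  | succ n ih => rw [Function.iterate_succ_apply']; exact A.twist_mem_roots ih

end SplitRegularHomLeibniz

namespace SplitRegularHomLeibniz

variable {K L : Type*} [Field K] [AddCommGroup L] [Module K L]
variable (A : SplitRegularHomLeibniz K L)

lemma chainSums_zero (f : ℕ → Module.Dual K A.H) : A.chainSums f 0 = f 0 := rfl

lemma chainSums_succ (f : ℕ → Module.Dual K A.H) (i : ℕ) :
    A.chainSums f (i + 1) = A.twist (A.chainSums f i + f (i + 1)) := rfl

lemma chainSums_congr {f g : ℕ → Module.Dual K A.H} (i : ℕ)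
    (h : ∀ j ≤ i, f j = g j) : A.chainSums f i = A.chainSums g i := by
  induction i with
  | zero => simpa [chainSums_zero] using h 0 le_rfl
  | succ i ih =>
      rw [chainSums_succ, chainSums_succ, ih (fun j hj => h j (hj.trans (Nat.le_succ i))),
        h (i+1) le_rfl]

lemma chainSums_twist (f : ℕ → Module.Dual K A.H) (i : ℕ) :
    A.chainSums (fun j => A.twist (f j)) i = A.twist (A.chainSums f i) := by
  induction i with
  | zero => rfl
  | succ i ih => rw [chainSums_succ, chainSums_succ, ih, ← twist_add]

lemma chainSums_titer (n : ℕ) (f : ℕ → Module.Dual K A.H) (i : ℕ) :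
    A.chainSums (fun j => A.twist^[n] (f j)) i = A.twist^[n] (A.chainSums f i) := by
  induction n with
  | zero => simp
  | succ n ih =>
      simp only [Function.iterate_succ_apply']
      rw [show (fun j => A.twist (A.twist^[n] (f j)))
          = (fun j => A.twist ((fun j' => A.twist^[n] (f j')) j)) from rfl,
        chainSums_twist, ih]

lemma chainSums_neg (f : ℕ → Module.Dual K A.H) (i : ℕ) :
    A.chainSums (fun j => -(f j)) i = -(A.chainSums f i) := by
  induction i with
  | zero => rfl
  | succ i ih => rw [chainSums_succ, chainSums_succ, ih, ← neg_add, twist_neg]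

lemma conn_neg_right {α β : Module.Dual K A.H} (h : A.Connected α β) :
    A.Connected α (-β) := by
  obtain ⟨k, f, h1, h2, h3, m, h4⟩ := h
  refine ⟨k, f, h1, h2, h3, m, ?_⟩
  rw [titer_neg, neg_neg]
  exact h4.symm

lemma conn_untwist_right {α β : Module.Dual K A.H} (h : A.Connected α β) :
    A.Connected α (A.untwist β) := by
  obtain ⟨k, f, h1, h2, h3, m, h4⟩ := h
  refine ⟨k, f, h1, h2, h3, m + 1, ?_⟩
  rwa [Function.iterate_succ_apply, twist_untwist]

/-- Concatenation of chains. -/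
lemma conn_append {α γ : Module.Dual K A.H} (F G : ℕ → Module.Dual K A.H) (k l : ℕ)
    (hF1 : ∀ i ≤ k, F i ∈ A.roots) (n : ℕ) (hF2 : F 0 = A.twist^[n] α)
    (hF3 : ∀ i < k, A.chainSums F i ∈ A.roots)
    (hG1 : ∀ j ≤ l, G j ∈ A.roots) (hkey : G 0 = A.chainSums F k)
    (hG3 : ∀ j < l, A.chainSums G j ∈ A.roots)
    (m : ℕ) (hG4 : A.chainSums G l = A.twist^[m] γ ∨ A.chainSums G l = -(A.twist^[m] γ)) :
    A.Connected α γ := by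
  set h : ℕ → Module.Dual K A.H := fun i => if i ≤ k then F i else G (i - k) with hh
  have e1 : ∀ i ≤ k, A.chainSums h i = A.chainSums F i := by
    intro i hi
    exact A.chainSums_congr i (fun j hj => by simp [hh, if_pos (hj.trans hi)])
  have e2 : ∀ j ≤ l, A.chainSums h (k + j) = A.chainSums G j := by
    intro j hj
    induction j with
    | zero => rw [Nat.add_zero, e1 k le_rfl, chainSums_zero, hkey]
    | succ j ih =>
        rw [show k + (j+1) = (k+j) + 1 from rfl, chainSums_succ,
          ih (le_of_lt hj), chainSums_succ]
        congr 2
        simp only [hh]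
        rw [if_neg (by omega)]
        congr 1
        omega
  refine ⟨k + l, h, ?_, ⟨n, ?_⟩, ?_, ⟨m, ?_⟩⟩
  · intro i hi
    by_cases hik : i ≤ k
    · simpa [hh, if_pos hik] using hF1 i hik
    · simp only [hh, if_neg hik]
      exact hG1 _ (by omega)
  · simpa [hh] using hF2
  · intro i hi
    by_cases hik : i < k
    · rw [e1 i (le_of_lt hik)]; exact hF3 i hik
    · have : i = k + (i - k) := by omega
      rw [this, e2 _ (by omega)]
      exact hG3 _ (by omega)
  · rw [e2 l le_rfl]; exact hG4

/-- Reversed chain. -/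
lemma rev_chain (hsym : A.SymmetricRoots) (f : ℕ → Module.Dual K A.H) (k : ℕ)
    (hf : ∀ i ≤ k, f i ∈ A.roots)
    (hs : ∀ i < k, A.chainSums f i ∈ A.roots)
    (hk : A.chainSums f k ∈ A.roots) :
    ∃ h : ℕ → Module.Dual K A.H, (∀ j ≤ k, h j ∈ A.roots) ∧ h 0 = A.chainSums f k ∧
      (∀ j < k, A.chainSums h j ∈ A.roots) ∧
      A.chainSums h k = A.twist^[2*k] (f 0) := by
  set h : ℕ → Module.Dual K A.H :=
    fun j => if j = 0 then A.chainSums f k else -(A.twist^[2*j-1] (f (k+1-j))) with hh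
  have key : ∀ j ≤ k, A.chainSums h j = A.twist^[2*j] (A.chainSums f (k - j)) := by
    intro j hj
    induction j with
    | zero => simp [hh, chainSums_zero]
    | succ j ih =>
        rw [chainSums_succ, ih (by omega)]
        have hkj : k - j = (k - (j+1)) + 1 := by omega
        have hidx : k + 1 - (j+1) = (k - (j+1)) + 1 := by omega
        rw [hkj, chainSums_succ]
        simp only [hh, if_neg (Nat.succ_ne_zero j), hidx]
        rw [show 2*(j+1) - 1 = 2*j + 1 by omega]
        rw [show (A.twist^[2*j] (A.twist (A.chainSums f (k - (j+1)) + f (k - (j+1) + 1))))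
            = A.twist^[2*j+1] (A.chainSums f (k - (j+1)) + f (k - (j+1) + 1)) from
          (Function.iterate_succ_apply A.twist (2*j) _).symm]
        rw [titer_add, add_neg_cancel_right]
        rw [show 2*(j+1) = (2*j+1) + 1 by omega]
        rw [Function.iterate_succ_apply' A.twist (2*j+1)]
  refine ⟨h, ?_, by simp [hh], ?_, ?_⟩
  · intro j hj
    by_cases hj0 : j = 0
    · simpa [hh, hj0] using hk
    · simp only [hh, if_neg hj0]
      exact hsym _ (A.titer_mem_roots _ (hf _ (by omega)))
  · intro j hj
    rw [key j (le_of_lt hj)]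
    apply A.titer_mem_roots
    rcases Nat.lt_or_ge (k - j) k with h' | h'
    · exact hs _ h'
    · have : k - j = k := by omega
      rw [this]; exact hk
  · rw [key k le_rfl, Nat.sub_self, chainSums_zero]

lemma conn_symm (hsym : A.SymmetricRoots) {α β : Module.Dual K A.H}
    (hβ : β ∈ A.roots) (hc : A.Connected α β) : A.Connected β α := by
  obtain ⟨k, f, h1, ⟨n, h2⟩, h3, m, h4⟩ := hc
  rcases h4 with h4 | h4
  · obtain ⟨h, hr, h0, hs, hfin⟩ := A.rev_chain hsym f k h1 h3
      (by rw [h4]; exact A.titer_mem_roots m hβ)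
    refine ⟨k, h, hr, ⟨m, by rw [h0, h4]⟩, hs, ⟨2*k + n, Or.inl ?_⟩⟩
    rw [hfin, h2, Function.iterate_add_apply]
  · set f' : ℕ → Module.Dual K A.H := fun i => -(f i) with hf'
    have hsneg : ∀ i, A.chainSums f' i = -(A.chainSums f i) := fun i => A.chainSums_neg f i
    obtain ⟨h, hr, h0, hs, hfin⟩ := A.rev_chain hsym f' k
      (fun i hi => hsym _ (h1 i hi))
      (fun i hi => by rw [hsneg]; exact hsym _ (h3 i hi))
      (by rw [hsneg, h4, neg_neg]; exact A.titer_mem_roots m hβ)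
    refine ⟨k, h, hr, ⟨m, by rw [h0, hsneg, h4, neg_neg]⟩, hs, ⟨2*k + n, Or.inr ?_⟩⟩
    rw [hfin]
    simp only [hf']
    rw [h2, titer_neg, Function.iterate_add_apply]

lemma conn_trans (hsym : A.SymmetricRoots) {α β γ : Module.Dual K A.H}
    (hab : A.Connected α β) (hbg : A.Connected β γ) : A.Connected α γ := by
  obtain ⟨k, f, hf1, ⟨n, hf2⟩, hf3, m, hf4⟩ := hab
  obtain ⟨l, g, hg1, ⟨n₂, hg2⟩, hg3, m₂, hg4⟩ := hbg
  set F : ℕ → Module.Dual K A.H := fun i => A.twist^[n₂] (f i) with hF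
  have hsF : ∀ i, A.chainSums F i = A.twist^[n₂] (A.chainSums f i) :=
    fun i => A.chainSums_titer n₂ f i
  have hF1 : ∀ i ≤ k, F i ∈ A.roots := fun i hi => A.titer_mem_roots _ (hf1 i hi)
  have hF2 : F 0 = A.twist^[n₂ + n] α := by
    simp only [hF]; rw [hf2, Function.iterate_add_apply]
  have hF3 : ∀ i < k, A.chainSums F i ∈ A.roots :=
    fun i hi => by rw [hsF]; exact A.titer_mem_roots _ (hf3 i hi)
  rcases hf4 with hf4 | hf4
  · set G : ℕ → Module.Dual K A.H := fun j => A.twist^[m] (g j) with hG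
    have hsG : ∀ j, A.chainSums G j = A.twist^[m] (A.chainSums g j) :=
      fun j => A.chainSums_titer m g j
    refine A.conn_append F G k l hF1 (n₂ + n) hF2 hF3
      (fun j hj => A.titer_mem_roots _ (hg1 j hj)) ?_
      (fun j hj => by rw [hsG]; exact A.titer_mem_roots _ (hg3 j hj))
      (m + m₂) ?_
    · simp only [hG, hsF]
      rw [hg2, hf4, ← Function.iterate_add_apply, ← Function.iterate_add_apply,
        Nat.add_comm m n₂]
    · rw [hsG]
      rcases hg4 with hg4 | hg4
      · exact Or.inl (by rw [hg4, ← Function.iterate_add_apply])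
      · exact Or.inr (by rw [hg4, titer_neg, ← Function.iterate_add_apply])
  · set G : ℕ → Module.Dual K A.H := fun j => A.twist^[m] (-(g j)) with hG
    have hsG : ∀ j, A.chainSums G j = A.twist^[m] (-(A.chainSums g j)) := by
      intro j
      exact (A.chainSums_titer m (fun i => -(g i)) j).trans (by rw [A.chainSums_neg])
    refine A.conn_append F G k l hF1 (n₂ + n) hF2 hF3
      (fun j hj => A.titer_mem_roots _ (hsym _ (hg1 j hj))) ?_
      (fun j hj => by rw [hsG]; exact A.titer_mem_roots _ (hsym _ (hg3 j hj)))
      (m + m₂) ?_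
    · simp only [hG, hsF]
      rw [hg2, hf4, titer_neg, titer_neg, ← Function.iterate_add_apply,
        ← Function.iterate_add_apply, Nat.add_comm m n₂]
    · rw [hsG]
      rcases hg4 with hg4 | hg4
      · exact Or.inr (by rw [hg4, titer_neg, ← Function.iterate_add_apply])
      · exact Or.inl (by rw [hg4, neg_neg, ← Function.iterate_add_apply])

end SplitRegularHomLeibniz

namespace SplitRegularHomLeibniz

variable {K L : Type*} [Field K] [AddCommGroup L] [Module K L]
variable (A : SplitRegularHomLeibniz K L)

lemma mem_cls {α δ : Module.Dual K A.H} :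
    δ ∈ A.cls α ↔ δ ∈ A.roots ∧ A.Connected α δ := Iff.rfl

lemma cls_neg {α δ : Module.Dual K A.H} (hsym : A.SymmetricRoots) (h : δ ∈ A.cls α) :
    -δ ∈ A.cls α := ⟨hsym _ h.1, A.conn_neg_right h.2⟩

lemma cls_untwist {α δ : Module.Dual K A.H} (h : δ ∈ A.cls α) :
    A.untwist δ ∈ A.cls α := ⟨A.untwist_mem_roots h.1, A.conn_untwist_right h.2⟩

/-- Core case: brackets of root vectors from non-connected classes vanish. -/
lemma core_case (hsym : A.SymmetricRoots) {α β : Module.Dual K A.H}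
    (hne : ¬ A.Connected α β) {δ ε : Module.Dual K A.H}
    (hδ : δ ∈ A.cls α) (hε : ε ∈ A.cls β)
    {u v : L} (hu : u ∈ A.rootSpace δ) (hv : v ∈ A.rootSpace ε) :
    A.bracket u v = 0 := by
  obtain ⟨hδr, hδc⟩ := hδ
  obtain ⟨hεr, hεc⟩ := hε
  by_contra hnz
  have hb := A.bracket_rootSpace hu hv
  by_cases hde : δ + ε = 0
  · have hεδ : ε = -δ := (neg_eq_of_add_eq_zero_right hde).symm
    have hβδ : A.Connected β δ := by
      have := A.conn_neg_right hεc
      rwa [hεδ, neg_neg] at this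
    exact hne (A.conn_trans hsym hδc (A.conn_symm hsym hδr hβδ))
  · have hroot : A.twist (δ + ε) ∈ A.roots := by
      refine ⟨fun h => hde (A.twist_eq_zero h), fun h => hnz ?_⟩
      exact (Submodule.eq_bot_iff _).mp h _ hb
    have hconn : A.Connected δ ε := by
      set c : ℕ → Module.Dual K A.H :=
        fun i => if i = 0 then δ else if i = 1 then ε else -(A.twist δ) with hc
      have hc0 : A.chainSums c 0 = δ := rfl
      have hc1 : A.chainSums c 1 = A.twist (δ + ε) := by
        rw [chainSums_succ, hc0]; rfl
      have hc2 : A.chainSums c 2 = A.twist^[2] ε := by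
        rw [chainSums_succ, hc1]
        show A.twist (A.twist (δ + ε) + -(A.twist δ)) = A.twist (A.twist ε)
        congr 1
        rw [twist_add]
        abel
      refine ⟨2, c, ?_, ⟨0, rfl⟩, ?_, ⟨2, Or.inl hc2⟩⟩
      · intro i hi
        interval_cases i
        · exact hδr
        · exact hεr
        · exact hsym _ (A.twist_mem_roots hδr)
      · intro i hi
        interval_cases i
        · rw [hc0]; exact hδr
        · rw [hc1]; exact hroot
    exact hne (A.conn_trans hsym hδc (A.conn_trans hsym hconn (A.conn_symm hsym hεr hεc)))

/-- Case (b): root vector against a bracket generator. -/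
lemma core_case_b (hsym : A.SymmetricRoots) {α β : Module.Dual K A.H}
    (hne : ¬ A.Connected α β) {δ ε : Module.Dual K A.H}
    (hδ : δ ∈ A.cls α) (hε : ε ∈ A.cls β)
    {x p q : L} (hx : x ∈ A.rootSpace δ) (hp : p ∈ A.rootSpace ε)
    (hq : q ∈ A.rootSpace (-ε)) :
    A.bracket x (A.bracket p q) = 0 := by
  have hx' : A.φ.symm x ∈ A.rootSpace (A.untwist δ) := A.phi_symm_rootSpace hx
  have h1 : A.bracket (A.φ.symm x) p = 0 :=
    A.core_case hsym hne (A.cls_untwist hδ) hε hx' hp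
  have h2 : A.bracket (A.φ.symm x) q = 0 :=
    A.core_case hsym hne (A.cls_untwist hδ) (A.cls_neg hsym hε) hx' hq
  have hl := A.leibniz q (A.φ.symm x) p
  rw [h1, h2] at hl
  simp only [map_zero, LinearMap.zero_apply, zero_add] at hl
  rw [← A.φ.apply_symm_apply x]
  exact hl.symm

/-- Case (c)/(d): bracket generator on the left. -/
lemma core_case_cd (hsym : A.SymmetricRoots) {α β : Module.Dual K A.H}
    (hne : ¬ A.Connected α β) {δ ε : Module.Dual K A.H}
    (hδ : δ ∈ A.cls α) (hε : ε ∈ A.cls β)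
    {u v y : L} (hu : u ∈ A.rootSpace δ) (hv : v ∈ A.rootSpace (-δ))
    (hy : (∃ ε', ε' ∈ A.cls β ∧ y ∈ A.rootSpace ε') ∨
      ∃ p ∈ A.rootSpace ε, ∃ q ∈ A.rootSpace (-ε), y = A.bracket p q) :
    A.bracket (A.bracket u v) y = 0 := by
  set y' : L := A.φ.symm y with hy'
  have h1 : A.bracket u y' = 0 := by
    rcases hy with ⟨ε', hε', hyε⟩ | ⟨p, hp, q, hq, rfl⟩
    · exact A.core_case hsym hne hδ (A.cls_untwist hε')
        hu (A.phi_symm_rootSpace hyε)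
    · have : y' = A.bracket (A.φ.symm p) (A.φ.symm q) := by
        apply A.φ.injective
        rw [hy', A.φ.apply_symm_apply, A.φ_bracket, A.φ.apply_symm_apply,
          A.φ.apply_symm_apply]
      rw [this]
      exact A.core_case_b hsym hne hδ (A.cls_untwist hε) hu
        (A.phi_symm_rootSpace hp)
        (by
          have := A.phi_symm_rootSpace hq
          rwa [untwist_neg] at this)
  have h2 : A.bracket v y' = 0 := by
    rcases hy with ⟨ε', hε', hyε⟩ | ⟨p, hp, q, hq, rfl⟩
    · exact A.core_case hsym hne (A.cls_neg hsym hδ) (A.cls_untwist hε')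
        hv (A.phi_symm_rootSpace hyε)
    · have : y' = A.bracket (A.φ.symm p) (A.φ.symm q) := by
        apply A.φ.injective
        rw [hy', A.φ.apply_symm_apply, A.φ_bracket, A.φ.apply_symm_apply,
          A.φ.apply_symm_apply]
      rw [this]
      exact A.core_case_b hsym hne (A.cls_neg hsym hδ) (A.cls_untwist hε) hv
        (A.phi_symm_rootSpace hp)
        (by
          have := A.phi_symm_rootSpace hq
          rwa [untwist_neg] at this)
  have hl := A.leibniz y' u v
  rw [h1, h2] at hl
  simp only [map_zero, LinearMap.zero_apply, zero_add, add_zero] at hl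
  rw [← A.φ.apply_symm_apply y]
  exact hl

end SplitRegularHomLeibniz

namespace SplitRegularHomLeibniz

variable {K L : Type*} [Field K] [AddCommGroup L] [Module K L]
variable (A : SplitRegularHomLeibniz K L)

lemma right_kill (x : L) {β : Module.Dual K A.H}
    (h1 : ∀ ε ∈ A.cls β, ∀ v ∈ A.rootSpace ε, A.bracket x v = 0)
    (h2 : ∀ ε ∈ A.cls β, ∀ p ∈ A.rootSpace ε, ∀ q ∈ A.rootSpace (-ε),
      A.bracket x (A.bracket p q) = 0) :
    ∀ y ∈ A.Icls β, A.bracket x y = 0 := by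
  have hle : A.Icls β ≤ LinearMap.ker (A.bracket x) := by
    rw [Icls]
    apply sup_le
    · rw [I0]
      apply iSup₂_le
      intro ε hε
      rw [bracketSpan, Submodule.span_le]
      rintro y ⟨p, hp, q, hq, rfl⟩
      exact LinearMap.mem_ker.mpr (h2 ε hε p hp q hq)
    · rw [Vcls]
      apply iSup₂_le
      intro ε hε v hv
      exact LinearMap.mem_ker.mpr (h1 ε hε v hv)
  exact fun y hy => LinearMap.mem_ker.mp (hle hy)

end SplitRegularHomLeibniz

open SplitRegularHomLeibniz in
theorem Icls_bracket_eq_zero {K L : Type*} [Field K] [AddCommGroup L] [Module K L]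
    (A : SplitRegularHomLeibniz K L)
    (hsplit : A.IsSplit) (hmax : A.MaximalAbelian)
    (hsym : A.SymmetricRoots) (α β : Module.Dual K A.H)
    (hα : α ∈ A.roots) (hβ : β ∈ A.roots) (hne : ¬ A.Connected α β) :
    ∀ x ∈ A.Icls α, ∀ y ∈ A.Icls β, A.bracket x y = 0 := by
  set X : Submodule K L :=
    { carrier := {x | ∀ y ∈ A.Icls β, A.bracket x y = 0}
      add_mem' := by
        intro a b ha hb y hy
        rw [map_add, LinearMap.add_apply, ha y hy, hb y hy, add_zero]
      zero_mem' := by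
        intro y hy
        rw [map_zero, LinearMap.zero_apply]
      smul_mem' := by
        intro c a ha y hy
        rw [map_smul, LinearMap.smul_apply, ha y hy, smul_zero] } with hX
  suffices hsub : A.Icls α ≤ X by
    intro x hx y hy
    exact hsub hx y hy
  rw [Icls]
  apply sup_le
  · rw [I0]
    apply iSup₂_le
    intro δ hδ
    rw [bracketSpan, Submodule.span_le]
    rintro t ⟨u, hu, v, hv, rfl⟩
    show ∀ y ∈ A.Icls β, A.bracket (A.bracket u v) y = 0
    exact A.right_kill _
      (fun ε hε w hw => A.core_case_cd hsym hne hδ hε hu hv (Or.inl ⟨ε, hε, hw⟩))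
      (fun ε hε p hp q hq => A.core_case_cd hsym hne hδ hε hu hv
        (Or.inr ⟨p, hp, q, hq, rfl⟩))
  · rw [Vcls]
    apply iSup₂_le
    intro δ hδ u hu
    show ∀ y ∈ A.Icls β, A.bracket u y = 0
    exact A.right_kill _
      (fun ε hε w hw => A.core_case hsym hne hδ hε hu hw)
      (fun ε hε p hp q hq => A.core_case_b hsym hne hδ hε hu hp hq)
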